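/- Let R be a commutative ring and m ≥ 2. If SL(m,R) = (U(m,R)·U⁻(m,R))^L for some L, then for every n ≥ m one has SL(n,R) = (U(n,R)·U⁻(n,R))^L, with the same number of factors. -/

import Mathlib

/-- Upper unitriangular square matrix. -/
def IsUpperUnitriangular {n : ℕ} {R : Type*} [CommRing R]
    (M : Matrix (Fin n) (Fin n) R) : Prop :=
  (∀ i, M i i = 1) ∧ ∀ i j : Fin n, j < i → M i j = 0

/-- Lower unitriangular square matrix. -/
def IsLowerUnitriangular {n : ℕ} {R : Type*} [CommRing R]
    (M : Matrix (Fin n) (Fin n) R) : Prop :=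
  (∀ i, M i i = 1) ∧ ∀ i j : Fin n, i < j → M i j = 0

/-!
Write `Y n = (U·U⁻)^L`. By induction on `n ≥ m` we show `Y n · E(n) ⊆ Y n`, which gives
`E(n) ⊆ Y n` because `1 ∈ Y n`. For `n = m` this is the hypothesis, as `Y m` and `E(m)` lie
in `SL(m, R)`.

For the step, split `U(n+1) = A · U(n)` and `U⁻(n+1) = U⁻(n) · B`, where `A` and `B` are the
last-column and last-row unipotent radicals. Since `GL(n, R)` normalises `A` and `B`,
`Y (n+1) = (A·B)^L · diag(Y n, 1)`, so `Y (n+1)` absorbs `E(n)`, i.e. the transvections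
`e_ij` with `i, j ≠ n`, on the right. The automorphism `θ M = w₀ (M⁻¹)ᵀ w₀` preserves `U`
and `U⁻`, hence `Y (n+1)`, and sends `e_ij(ξ)` to `e_(n-j)(n-i)(-ξ)`; this handles the
transvections with `i, j ≠ 0`. The two corner transvections `e_0n` and `e_n0` remain. They
are commutators of transvections already handled.
-/

open Matrix Pointwise

def rightStabilizer {M : Type*} [Monoid M] (Y : Set M) : Submonoid M where
  carrier := {x | ∀ y ∈ Y, y * x ∈ Y}
  mul_mem' hx hx' y hy := mul_assoc y _ _ ▸ hx' _ (hx y hy)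
  one_mem' y hy := (mul_one y).symm ▸ hy

lemma Set.commute_of_forall_exists {M : Type*} [Monoid M] {s t : Set M}
    (h₁ : ∀ a ∈ s, ∀ b ∈ t, ∃ b' ∈ t, a * b = b' * a)
    (h₂ : ∀ a ∈ s, ∀ b ∈ t, ∃ b' ∈ t, b * a = a * b') : Commute s t := by
  refine Set.Subset.antisymm ?_ ?_
  · rintro _ ⟨a, ha, b, hb, rfl⟩
    obtain ⟨b', hb', h⟩ := h₁ a ha b hb
    exact ⟨b', hb', a, ha, h.symm⟩
  · rintro _ ⟨b, hb, a, ha, rfl⟩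
    obtain ⟨b', hb', h⟩ := h₂ a ha b hb
    exact ⟨a, ha, b', hb', h.symm⟩

lemma Commute.mul_mul_mul_pow {N : Type*} [Monoid N] {a b p q : N} (hpa : Commute p a)
    (hpb : Commute p b) (hqa : Commute q a) (hqb : Commute q b) (L : ℕ) :
    (a * p * (b * q)) ^ L = (a * b) ^ L * (p * q) ^ L := by
  have hswap : a * p * (b * q) = a * b * (p * q) := by
    rw [mul_assoc, ← mul_assoc p, hpb.eq, mul_assoc, mul_assoc]
  rw [hswap, ((hpa.mul_left hqa).mul_right (hpb.mul_left hqb)).symm.mul_pow]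

lemma Matrix.IsUpperTriangular.diag_mul {ι α : Type*} [Fintype ι] [LinearOrder ι]
    [NonUnitalNonAssocSemiring α] {A B : Matrix ι ι α} (hA : A.IsUpperTriangular)
    (hB : B.IsUpperTriangular) : (A * B).diag = A.diag * B.diag := by
  funext i
  refine Finset.sum_eq_single i (fun k _ hki => ?_) (fun h => absurd (Finset.mem_univ i) h)
  rcases lt_or_gt_of_ne hki with h | h
  · exact mul_eq_zero_of_left (hA h) _
  · exact mul_eq_zero_of_right _ (hB h)

section Transvections

variable {ι R : Type*} [Fintype ι] [DecidableEq ι] [CommRing R]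

variable (ι R) in
def transvections : Set (Matrix ι ι R) :=
  {M | ∃ (i j : ι) (ξ : R), i ≠ j ∧ M = transvection i j ξ}

variable (ι R) in
def elementary : Submonoid (Matrix ι ι R) :=
  Submonoid.closure (transvections ι R)

lemma transvection_mem_elementary {i j : ι} (hij : i ≠ j) (ξ : R) :
    transvection i j ξ ∈ elementary ι R :=
  Submonoid.subset_closure ⟨i, j, ξ, hij, rfl⟩

lemma det_eq_one_of_mem_elementary {g : Matrix ι ι R} (hg : g ∈ elementary ι R) : g.det = 1 :=
  (Submonoid.closure_le (S := MonoidHom.mker (detMonoidHom (n := ι) (R := R)))).2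
    (by rintro _ ⟨i, j, ξ, hij, rfl⟩; exact det_transvection_of_ne i j hij ξ) hg

lemma transvection_inv {i j : ι} (hij : i ≠ j) (ξ : R) :
    (transvection i j ξ)⁻¹ = transvection i j (-ξ) :=
  inv_eq_right_inv (by rw [transvection_mul_transvection_same i j hij, add_neg_cancel,
    transvection_zero])

lemma transvection_commutator {i j p : ι} (hij : i ≠ j) (hip : i ≠ p) (hpj : p ≠ j) (ξ : R) :
    transvection i p ξ * transvection p j 1 * transvection i p (-ξ) * transvection p j (-1) =
      transvection i j ξ := by
  simp only [transvection, add_mul, mul_add, mul_one, one_mul, single_mul_single_same,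
    single_mul_single_of_ne _ _ _ _ hip.symm, single_mul_single_of_ne _ _ _ _ hpj.symm,
    single_mul_single_of_ne _ _ _ _ hij.symm, add_zero]
  simp only [mul_neg, mul_one, neg_neg, ← single_neg]
  abel

end Transvections

section Unitriangular

variable {n : ℕ} {R : Type*} [CommRing R]

lemma isLowerUnitriangular_iff_transpose {M : Matrix (Fin n) (Fin n) R} :
    IsLowerUnitriangular M ↔ IsUpperUnitriangular Mᵀ :=
  ⟨fun h => ⟨h.1, fun i j hij => h.2 j i hij⟩, fun h => ⟨h.1, fun i j hij => h.2 j i hij⟩⟩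

lemma isUpperUnitriangular_one : IsUpperUnitriangular (1 : Matrix (Fin n) (Fin n) R) :=
  ⟨fun _ => one_apply_eq _, fun _ _ h => one_apply_ne h.ne'⟩

namespace IsUpperUnitriangular

variable {M N : Matrix (Fin n) (Fin n) R}

lemma isUpperTriangular (hM : IsUpperUnitriangular M) : M.IsUpperTriangular :=
  fun _ _ h => hM.2 _ _ h

lemma mul (hM : IsUpperUnitriangular M) (hN : IsUpperUnitriangular N) :
    IsUpperUnitriangular (M * N) := by
  refine ⟨fun i => ?_, fun i j h => (hM.isUpperTriangular.mul hN.isUpperTriangular) h⟩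
  simpa [hM.1 i, hN.1 i] using congrFun (hM.isUpperTriangular.diag_mul hN.isUpperTriangular) i

lemma det (hM : IsUpperUnitriangular M) : M.det = 1 := by
  simp [det_of_isUpperTriangular hM.isUpperTriangular, hM.1]

lemma inv (hM : IsUpperUnitriangular M) : IsUpperUnitriangular M⁻¹ := by
  have hunit : IsUnit M.det := hM.det ▸ isUnit_one
  have : Invertible M := invertibleOfIsUnitDet M hunit
  have htri : M⁻¹.IsUpperTriangular :=
    blockTriangular_inv_of_blockTriangular hM.isUpperTriangular
  refine ⟨fun i => ?_, fun i j h => htri h⟩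
  have hdiag := congrFun (hM.isUpperTriangular.diag_mul htri) i
  simpa [mul_nonsing_inv M hunit, hM.1 i] using hdiag.symm

end IsUpperUnitriangular

namespace IsLowerUnitriangular

variable {M N : Matrix (Fin n) (Fin n) R}

lemma mul (hM : IsLowerUnitriangular M) (hN : IsLowerUnitriangular N) :
    IsLowerUnitriangular (M * N) := by
  rw [isLowerUnitriangular_iff_transpose, transpose_mul]
  exact (isLowerUnitriangular_iff_transpose.1 hN).mul (isLowerUnitriangular_iff_transpose.1 hM)

lemma det (hM : IsLowerUnitriangular M) : M.det = 1 := by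
  rw [← det_transpose]
  exact (isLowerUnitriangular_iff_transpose.1 hM).det

lemma inv (hM : IsLowerUnitriangular M) : IsLowerUnitriangular M⁻¹ := by
  rw [isLowerUnitriangular_iff_transpose, transpose_nonsing_inv]
  exact (isLowerUnitriangular_iff_transpose.1 hM).inv

end IsLowerUnitriangular

variable (n R) in
def upperUnitriangular : Submonoid (Matrix (Fin n) (Fin n) R) where
  carrier := {M | IsUpperUnitriangular M}
  mul_mem' := IsUpperUnitriangular.mul
  one_mem' := isUpperUnitriangular_one

variable (n R) in
def lowerUnitriangular : Submonoid (Matrix (Fin n) (Fin n) R) where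
  carrier := {M | IsLowerUnitriangular M}
  mul_mem' := IsLowerUnitriangular.mul
  one_mem' :=
    isLowerUnitriangular_iff_transpose.2 (by rw [transpose_one]; exact isUpperUnitriangular_one)

end Unitriangular

section Products

variable {n : ℕ} {R : Type*} [CommRing R]

variable (n R) in
def unitriangularProducts (L : ℕ) : Set (Matrix (Fin n) (Fin n) R) :=
  ((upperUnitriangular n R : Set (Matrix (Fin n) (Fin n) R)) * lowerUnitriangular n R) ^ L

lemma mem_unitriangularProducts_iff {L : ℕ} {g : Matrix (Fin n) (Fin n) R} :
    g ∈ unitriangularProducts n R L ↔ ∃ u v : Fin L → Matrix (Fin n) (Fin n) R,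
      (∀ i, IsUpperUnitriangular (u i)) ∧ (∀ i, IsLowerUnitriangular (v i)) ∧
      g = (List.ofFn fun i => u i * v i).prod := by
  rw [unitriangularProducts, Set.mem_pow]
  constructor
  · rintro ⟨f, rfl⟩
    choose u hu v hv huv using fun i => Set.mem_mul.1 (f i).2
    exact ⟨u, v, hu, hv, by simp only [huv]⟩
  · rintro ⟨u, v, hu, hv, rfl⟩
    exact ⟨fun i => ⟨u i * v i, Set.mul_mem_mul (hu i) (hv i)⟩, rfl⟩

lemma one_mem_unitriangularProducts (L : ℕ) :
    (1 : Matrix (Fin n) (Fin n) R) ∈ unitriangularProducts n R L :=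
  Set.one_mem_pow ⟨1, one_mem _, 1, one_mem _, one_mul 1⟩

lemma det_eq_one_of_mem_unitriangularProducts {L : ℕ} {g : Matrix (Fin n) (Fin n) R}
    (hg : g ∈ unitriangularProducts n R L) : g.det = 1 := by
  refine Submonoid.pow_subset (S := MonoidHom.mker (detMonoidHom (n := Fin n) (R := R))) ?_ hg
  rintro _ ⟨u, hu, v, hv, rfl⟩
  simp [MonoidHom.mem_mker, IsUpperUnitriangular.det hu, IsLowerUnitriangular.det hv]

end Products

section ExtendByOne

variable {n : ℕ} {R : Type*} [CommRing R]

def extendByOne : Matrix (Fin n) (Fin n) R →* Matrix (Fin (n + 1)) (Fin (n + 1)) R where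
  toFun H := Matrix.of fun i j =>
    Fin.lastCases (Fin.lastCases 1 (fun _ => 0) j) (fun i' => Fin.lastCases 0 (H i') j) i
  map_one' := by
    ext i j
    induction i using Fin.lastCases <;> induction j using Fin.lastCases <;>
      simp [one_apply, fun k : Fin n => (Fin.castSucc_ne_last k).symm]
  map_mul' H K := by
    ext i j
    induction i using Fin.lastCases <;> induction j using Fin.lastCases <;>
      simp [mul_apply, Fin.sum_univ_castSucc]

variable (H : Matrix (Fin n) (Fin n) R) (i j : Fin n)

@[simp] lemma extendByOne_apply_castSucc_castSucc :
    extendByOne H i.castSucc j.castSucc = H i j := by simp [extendByOne]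

@[simp] lemma extendByOne_apply_castSucc_last : extendByOne H i.castSucc (Fin.last n) = 0 := by
  simp [extendByOne]

@[simp] lemma extendByOne_apply_last_castSucc : extendByOne H (Fin.last n) j.castSucc = 0 := by
  simp [extendByOne]

@[simp] lemma extendByOne_apply_last_last : extendByOne H (Fin.last n) (Fin.last n) = 1 := by
  simp [extendByOne]

lemma extendByOne_transvection (ξ : R) :
    extendByOne (transvection i j ξ) = transvection i.castSucc j.castSucc ξ := by
  ext a b
  induction a using Fin.lastCases <;> induction b using Fin.lastCases <;>
    simp [transvection, one_apply, single_apply, fun k : Fin n => (Fin.castSucc_ne_last k).symm]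

lemma IsUpperUnitriangular.map_extendByOne {H : Matrix (Fin n) (Fin n) R}
    (hH : IsUpperUnitriangular H) : IsUpperUnitriangular (extendByOne H) := by
  refine ⟨fun a => ?_, fun a b hba => ?_⟩
  · induction a using Fin.lastCases <;> simp [hH.1]
  · induction a using Fin.lastCases <;> induction b using Fin.lastCases
    · exact absurd hba (lt_irrefl _)
    · simp
    · exact absurd hba (Fin.castSucc_lt_last _).not_gt
    · simpa using hH.2 _ _ (Fin.castSucc_lt_castSucc_iff.1 hba)

lemma IsLowerUnitriangular.map_extendByOne {H : Matrix (Fin n) (Fin n) R}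
    (hH : IsLowerUnitriangular H) : IsLowerUnitriangular (extendByOne H) := by
  refine ⟨fun a => ?_, fun a b hab => ?_⟩
  · induction a using Fin.lastCases <;> simp [hH.1]
  · induction a using Fin.lastCases <;> induction b using Fin.lastCases
    · exact absurd hab (lt_irrefl _)
    · exact absurd hab (Fin.castSucc_lt_last _).not_gt
    · simp
    · simpa using hH.2 _ _ (Fin.castSucc_lt_castSucc_iff.1 hab)

end ExtendByOne

section Radicals

variable {n : ℕ} {R : Type*} [CommRing R]

def colRadical (c : Fin n → R) : Matrix (Fin (n + 1)) (Fin (n + 1)) R :=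
  1 + vecMulVec (Fin.snoc c 0) (Pi.single (Fin.last n) 1)

def rowRadical (r : Fin n → R) : Matrix (Fin (n + 1)) (Fin (n + 1)) R :=
  1 + vecMulVec (Pi.single (Fin.last n) 1) (Fin.snoc r 0)

lemma isUpperUnitriangular_colRadical (c : Fin n → R) : IsUpperUnitriangular (colRadical c) := by
  refine ⟨fun a => ?_, fun a b hba => ?_⟩
  · induction a using Fin.lastCases <;> simp [colRadical, vecMulVec_apply]
  · induction b using Fin.lastCases
    · exact absurd hba (Fin.le_last a).not_gt
    · simp [colRadical, vecMulVec_apply, one_apply_ne hba.ne']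

lemma isLowerUnitriangular_rowRadical (r : Fin n → R) : IsLowerUnitriangular (rowRadical r) := by
  refine ⟨fun a => ?_, fun a b hab => ?_⟩
  · induction a using Fin.lastCases <;> simp [rowRadical, vecMulVec_apply]
  · induction a using Fin.lastCases
    · exact absurd hab (Fin.le_last b).not_gt
    · simp [rowRadical, vecMulVec_apply, one_apply_ne hab.ne]

variable (h : Matrix (Fin n) (Fin n) R)

lemma extendByOne_mulVec_snoc (c : Fin n → R) :
    extendByOne h *ᵥ Fin.snoc c 0 = Fin.snoc (h *ᵥ c) 0 := by
  funext a
  induction a using Fin.lastCases <;> simp [mulVec, dotProduct, Fin.sum_univ_castSucc]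

lemma snoc_vecMul_extendByOne (r : Fin n → R) :
    Fin.snoc r 0 ᵥ* extendByOne h = Fin.snoc (r ᵥ* h) 0 := by
  funext a
  induction a using Fin.lastCases <;> simp [vecMul, dotProduct, Fin.sum_univ_castSucc]

lemma extendByOne_mulVec_single_last :
    extendByOne h *ᵥ Pi.single (Fin.last n) 1 = Pi.single (Fin.last n) 1 := by
  funext a
  induction a using Fin.lastCases <;> simp [mulVec, dotProduct, Fin.sum_univ_castSucc]

lemma single_last_vecMul_extendByOne :
    Pi.single (Fin.last n) 1 ᵥ* extendByOne h = Pi.single (Fin.last n) 1 := by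
  funext a
  induction a using Fin.lastCases <;> simp [vecMul, dotProduct, Fin.sum_univ_castSucc]

lemma extendByOne_mul_colRadical (c : Fin n → R) :
    extendByOne h * colRadical c = colRadical (h *ᵥ c) * extendByOne h := by
  rw [colRadical, colRadical, mul_add, add_mul, mul_one, one_mul, mul_vecMulVec,
    extendByOne_mulVec_snoc, vecMulVec_mul, single_last_vecMul_extendByOne]

lemma rowRadical_mul_extendByOne (r : Fin n → R) :
    rowRadical r * extendByOne h = extendByOne h * rowRadical (r ᵥ* h) := by
  rw [rowRadical, rowRadical, mul_add, add_mul, mul_one, one_mul, vecMulVec_mul,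
    snoc_vecMul_extendByOne, mul_vecMulVec, extendByOne_mulVec_single_last]

lemma IsUpperUnitriangular.eq_colRadical_mul_extendByOne
    {u : Matrix (Fin (n + 1)) (Fin (n + 1)) R} (hu : IsUpperUnitriangular u) :
    u = colRadical (fun i => u i.castSucc (Fin.last n)) *
      extendByOne (u.submatrix Fin.castSucc Fin.castSucc) := by
  rw [colRadical, add_mul, one_mul, vecMulVec_mul, single_last_vecMul_extendByOne]
  ext a b
  induction a using Fin.lastCases <;> induction b using Fin.lastCases <;>
    simp [vecMulVec_apply, hu.1, hu.2 _ _ (Fin.castSucc_lt_last _)]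

lemma IsLowerUnitriangular.eq_extendByOne_mul_rowRadical
    {v : Matrix (Fin (n + 1)) (Fin (n + 1)) R} (hv : IsLowerUnitriangular v) :
    v = extendByOne (v.submatrix Fin.castSucc Fin.castSucc) *
      rowRadical (fun j => v (Fin.last n) j.castSucc) := by
  rw [rowRadical, mul_add, mul_one, mul_vecMulVec, extendByOne_mulVec_single_last]
  ext a b
  induction a using Fin.lastCases <;> induction b using Fin.lastCases <;>
    simp [vecMulVec_apply, hv.1, hv.2 _ _ (Fin.castSucc_lt_last _)]

end Radicals

section Levi

variable {n : ℕ} {R : Type*} [CommRing R]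

lemma commute_image_extendByOne_range_colRadical {X : Set (Matrix (Fin n) (Fin n) R)}
    (hX : ∀ h ∈ X, IsUnit h.det) :
    Commute (extendByOne '' X) (Set.range (colRadical (n := n) (R := R))) := by
  refine Set.commute_of_forall_exists ?_ ?_
  · rintro _ ⟨h, -, rfl⟩ _ ⟨c, rfl⟩
    exact ⟨_, ⟨h *ᵥ c, rfl⟩, extendByOne_mul_colRadical h c⟩
  · rintro _ ⟨h, hh, rfl⟩ _ ⟨c, rfl⟩
    refine ⟨_, ⟨h⁻¹ *ᵥ c, rfl⟩, ?_⟩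
    rw [extendByOne_mul_colRadical, mulVec_mulVec, mul_nonsing_inv h (hX h hh), one_mulVec]

lemma commute_image_extendByOne_range_rowRadical {X : Set (Matrix (Fin n) (Fin n) R)}
    (hX : ∀ h ∈ X, IsUnit h.det) :
    Commute (extendByOne '' X) (Set.range (rowRadical (n := n) (R := R))) := by
  refine Set.commute_of_forall_exists ?_ ?_
  · rintro _ ⟨h, hh, rfl⟩ _ ⟨r, rfl⟩
    refine ⟨_, ⟨r ᵥ* h⁻¹, rfl⟩, ?_⟩
    rw [rowRadical_mul_extendByOne, vecMul_vecMul, nonsing_inv_mul h (hX h hh), vecMul_one]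
  · rintro _ ⟨h, -, rfl⟩ _ ⟨r, rfl⟩
    exact ⟨_, ⟨r ᵥ* h, rfl⟩, rowRadical_mul_extendByOne h r⟩

lemma upperUnitriangular_succ :
    (upperUnitriangular (n + 1) R : Set (Matrix (Fin (n + 1)) (Fin (n + 1)) R)) =
      Set.range colRadical * extendByOne '' upperUnitriangular n R := by
  refine Set.Subset.antisymm (fun u hu => ?_) ?_
  · exact ⟨_, ⟨_, rfl⟩, _, ⟨_, ⟨fun i => hu.1 _, fun i j hji => hu.2 _ _ hji⟩, rfl⟩,
      (IsUpperUnitriangular.eq_colRadical_mul_extendByOne hu).symm⟩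
  · rintro _ ⟨_, ⟨c, rfl⟩, _, ⟨h, hh, rfl⟩, rfl⟩
    exact (isUpperUnitriangular_colRadical c).mul hh.map_extendByOne

lemma lowerUnitriangular_succ :
    (lowerUnitriangular (n + 1) R : Set (Matrix (Fin (n + 1)) (Fin (n + 1)) R)) =
      extendByOne '' lowerUnitriangular n R * Set.range rowRadical := by
  refine Set.Subset.antisymm (fun v hv => ?_) ?_
  · exact ⟨_, ⟨_, ⟨fun i => hv.1 _, fun i j hij => hv.2 _ _ hij⟩, rfl⟩, _, ⟨_, rfl⟩,
      (IsLowerUnitriangular.eq_extendByOne_mul_rowRadical hv).symm⟩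
  · rintro _ ⟨_, ⟨h, hh, rfl⟩, _, ⟨r, rfl⟩, rfl⟩
    exact hh.map_extendByOne.mul (isLowerUnitriangular_rowRadical r)

lemma unitriangularProducts_succ (L : ℕ) :
    unitriangularProducts (n + 1) R L =
      (Set.range colRadical * Set.range rowRadical) ^ L *
        extendByOne '' unitriangularProducts n R L := by
  have hU : ∀ h ∈ upperUnitriangular n R, IsUnit h.det :=
    fun h hh => (IsUpperUnitriangular.det hh).symm ▸ isUnit_one
  have hV : ∀ h ∈ lowerUnitriangular n R, IsUnit h.det :=
    fun h hh => (IsLowerUnitriangular.det hh).symm ▸ isUnit_one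
  rw [unitriangularProducts, unitriangularProducts, upperUnitriangular_succ,
    lowerUnitriangular_succ, (commute_image_extendByOne_range_rowRadical hV).eq, Set.image_pow,
    Set.image_mul]
  exact Commute.mul_mul_mul_pow (commute_image_extendByOne_range_colRadical hU)
    (commute_image_extendByOne_range_rowRadical hU) (commute_image_extendByOne_range_colRadical hV)
    (commute_image_extendByOne_range_rowRadical hV) L

lemma extendByOne_mem_rightStabilizer {L : ℕ} {h : Matrix (Fin n) (Fin n) R}
    (hh : h ∈ rightStabilizer (unitriangularProducts n R L)) :
    extendByOne h ∈ rightStabilizer (unitriangularProducts (n + 1) R L) := by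
  intro y hy
  rw [unitriangularProducts_succ] at hy ⊢
  obtain ⟨w, hw, _, ⟨y₀, hy₀, rfl⟩, rfl⟩ := hy
  exact ⟨w, hw, _, ⟨y₀ * h, hh y₀ hy₀, map_mul _ _ _⟩, (mul_assoc _ _ _).symm⟩

end Levi

section RevInvTranspose

variable {n : ℕ} {R : Type*} [CommRing R]

-- Multiplicative even where `M⁻¹` is the junk inverse, since `(A * B)⁻¹ = B⁻¹ * A⁻¹` holds
-- for all square matrices.
noncomputable def revInvTranspose : Matrix (Fin n) (Fin n) R →* Matrix (Fin n) (Fin n) R where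
  toFun M := M⁻¹ᵀ.submatrix Fin.revPerm Fin.revPerm
  map_one' := by simp
  map_mul' A B := by rw [Matrix.mul_inv_rev, transpose_mul, submatrix_mul_equiv]

lemma revInvTranspose_apply (M : Matrix (Fin n) (Fin n) R) (i j : Fin n) :
    revInvTranspose M i j = M⁻¹ j.rev i.rev := rfl

lemma revInvTranspose_revInvTranspose {M : Matrix (Fin n) (Fin n) R} (hM : IsUnit M.det) :
    revInvTranspose (revInvTranspose M) = M := by
  ext i j
  simp [revInvTranspose, inv_submatrix_equiv, ← transpose_nonsing_inv, nonsing_inv_nonsing_inv _ hM]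

lemma IsUpperUnitriangular.map_revInvTranspose {M : Matrix (Fin n) (Fin n) R}
    (hM : IsUpperUnitriangular M) : IsUpperUnitriangular (revInvTranspose M) :=
  ⟨fun _ => hM.inv.1 _, fun _ _ hji => hM.inv.2 _ _ (Fin.rev_lt_rev.2 hji)⟩

lemma IsLowerUnitriangular.map_revInvTranspose {M : Matrix (Fin n) (Fin n) R}
    (hM : IsLowerUnitriangular M) : IsLowerUnitriangular (revInvTranspose M) :=
  ⟨fun _ => hM.inv.1 _, fun _ _ hij => hM.inv.2 _ _ (Fin.rev_lt_rev.2 hij)⟩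

lemma revInvTranspose_transvection {i j : Fin n} (hij : i ≠ j) (ξ : R) :
    revInvTranspose (transvection i j ξ) = transvection j.rev i.rev (-ξ) := by
  ext a b
  rw [revInvTranspose_apply, transvection_inv hij]
  simp only [transvection, Matrix.add_apply, one_apply, Fin.rev_inj, single_apply, eq_comm (a := b)]
  exact congrArg _ (if_congr (and_comm.trans (and_congr Fin.rev_eq_iff.symm Fin.rev_eq_iff.symm))
    rfl rfl)

lemma revInvTranspose_mem_unitriangularProducts {L : ℕ} {y : Matrix (Fin n) (Fin n) R}
    (hy : y ∈ unitriangularProducts n R L) : revInvTranspose y ∈ unitriangularProducts n R L := by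
  have hmaps : revInvTranspose '' unitriangularProducts n R L ⊆ unitriangularProducts n R L := by
    rw [unitriangularProducts, Set.image_pow, Set.image_mul]
    exact Set.pow_subset_pow_left (Set.mul_subset_mul
      (Set.image_subset_iff.2 fun _ hu => IsUpperUnitriangular.map_revInvTranspose hu)
      (Set.image_subset_iff.2 fun _ hv => IsLowerUnitriangular.map_revInvTranspose hv))
  exact hmaps ⟨y, hy, rfl⟩

lemma mem_rightStabilizer_of_revInvTranspose {L : ℕ} {x : Matrix (Fin n) (Fin n) R}
    (hx : IsUnit x.det) (h : revInvTranspose x ∈ rightStabilizer (unitriangularProducts n R L)) :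
    x ∈ rightStabilizer (unitriangularProducts n R L) := by
  intro y hy
  have hyx : IsUnit (y * x).det := by
    rwa [det_mul, det_eq_one_of_mem_unitriangularProducts hy, one_mul]
  rw [← revInvTranspose_revInvTranspose hyx, map_mul]
  exact revInvTranspose_mem_unitriangularProducts
    (h _ (revInvTranspose_mem_unitriangularProducts hy))

end RevInvTranspose

section Stability

variable {n L : ℕ} {R : Type*} [CommRing R]

lemma transvection_mem_rightStabilizer_of_ne_last
    (hE : elementary (Fin n) R ≤ rightStabilizer (unitriangularProducts n R L)) {a b : Fin (n + 1)}
    (ha : a ≠ Fin.last n) (hb : b ≠ Fin.last n) (hab : a ≠ b) (ξ : R) :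
    transvection a b ξ ∈ rightStabilizer (unitriangularProducts (n + 1) R L) := by
  have hab' : a.castPred ha ≠ b.castPred hb := fun h => hab (Fin.castPred_inj.1 h)
  have := extendByOne_mem_rightStabilizer (hE (transvection_mem_elementary hab' ξ))
  rwa [extendByOne_transvection, Fin.castSucc_castPred, Fin.castSucc_castPred] at this

lemma transvection_mem_rightStabilizer_of_ne_zero
    (hE : elementary (Fin n) R ≤ rightStabilizer (unitriangularProducts n R L)) {a b : Fin (n + 1)}
    (ha : a ≠ 0) (hb : b ≠ 0) (hab : a ≠ b) (ξ : R) :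
    transvection a b ξ ∈ rightStabilizer (unitriangularProducts (n + 1) R L) := by
  have hrev {c : Fin (n + 1)} (hc : c ≠ 0) : c.rev ≠ Fin.last n := by
    rwa [Ne, Fin.rev_eq_iff, Fin.rev_last]
  refine mem_rightStabilizer_of_revInvTranspose
    (by rw [det_transvection_of_ne _ _ hab]; exact isUnit_one) ?_
  rw [revInvTranspose_transvection hab]
  exact transvection_mem_rightStabilizer_of_ne_last hE (hrev hb) (hrev ha)
    (Fin.rev_injective.ne hab.symm) _

lemma transvection_mem_rightStabilizer_succ (hn : 2 ≤ n)
    (hE : elementary (Fin n) R ≤ rightStabilizer (unitriangularProducts n R L)) {i j : Fin (n + 1)}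
    (hij : i ≠ j) (ξ : R) :
    transvection i j ξ ∈ rightStabilizer (unitriangularProducts (n + 1) R L) := by
  have hend (a : Fin (n + 1)) : a ≠ Fin.last n ∨ a ≠ 0 := by
    by_contra! h
    exact absurd (h.1.symm.trans h.2) (by simp [Fin.ext_iff]; omega)
  have off_corner {a b : Fin (n + 1)} (hab : a ≠ b)
      (h : (a ≠ Fin.last n ∧ b ≠ Fin.last n) ∨ (a ≠ 0 ∧ b ≠ 0)) (ξ : R) :
      transvection a b ξ ∈ rightStabilizer (unitriangularProducts (n + 1) R L) := by
    rcases h with ⟨ha, hb⟩ | ⟨ha, hb⟩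
    exacts [transvection_mem_rightStabilizer_of_ne_last hE ha hb hab ξ,
      transvection_mem_rightStabilizer_of_ne_zero hE ha hb hab ξ]
  by_cases h : (i ≠ Fin.last n ∧ j ≠ Fin.last n) ∨ (i ≠ 0 ∧ j ≠ 0)
  · exact off_corner hij h ξ
  -- `{i, j} = {0, n}`: pass through the index `1`, which lies strictly between them
  let p : Fin (n + 1) := ⟨1, by omega⟩
  have hp0 : p ≠ 0 := by simp [p, Fin.ext_iff]
  have hpl : p ≠ Fin.last n := by simp [p, Fin.ext_iff]; omega
  have hip : (i ≠ Fin.last n ∧ p ≠ Fin.last n) ∨ (i ≠ 0 ∧ p ≠ 0) :=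
    (hend i).imp (⟨·, hpl⟩) (⟨·, hp0⟩)
  have hpj : (p ≠ Fin.last n ∧ j ≠ Fin.last n) ∨ (p ≠ 0 ∧ j ≠ 0) :=
    (hend j).imp (⟨hpl, ·⟩) (⟨hp0, ·⟩)
  have hip' : i ≠ p := by rintro rfl; exact h hpj
  have hpj' : p ≠ j := by rintro rfl; exact h hip
  rw [← transvection_commutator hij hip' hpj' ξ]
  exact mul_mem (mul_mem (mul_mem (off_corner hip' hip ξ) (off_corner hpj' hpj 1))
    (off_corner hip' hip (-ξ))) (off_corner hpj' hpj (-1))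

lemma elementary_le_rightStabilizer_succ (hn : 2 ≤ n)
    (hE : elementary (Fin n) R ≤ rightStabilizer (unitriangularProducts n R L)) :
    elementary (Fin (n + 1)) R ≤ rightStabilizer (unitriangularProducts (n + 1) R L) :=
  Submonoid.closure_le.2 fun _ ⟨_, _, ξ, hij, ht⟩ =>
    ht ▸ transvection_mem_rightStabilizer_succ hn hE hij ξ

end Stability

/-- If `SL(m,R) = (U·U⁻)^L`, then for every `n ≥ m` the
elementary group `E(n,R)` (generated by elementary transvections) satisfies
`E(n,R) = (U·U⁻)^L`, with the same number of factors. -/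
theorem stability_of_unitriangular_factorisation
    (R : Type*) [CommRing R] (m L : ℕ) (hm : 2 ≤ m)
    (hSL : ∀ g : Matrix (Fin m) (Fin m) R, g.det = 1 →
      ∃ u v : Fin L → Matrix (Fin m) (Fin m) R,
        (∀ i, IsUpperUnitriangular (u i)) ∧ (∀ i, IsLowerUnitriangular (v i)) ∧
        g = (List.ofFn fun i => u i * v i).prod)
    (n : ℕ) (hn : m ≤ n) (g : Matrix (Fin n) (Fin n) R)
    (hg : g ∈ Submonoid.closure {M : Matrix (Fin n) (Fin n) R |
      ∃ (i j : Fin n) (ξ : R), i ≠ j ∧ M = 1 + Matrix.single i j ξ}) :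
    ∃ u v : Fin L → Matrix (Fin n) (Fin n) R,
      (∀ i, IsUpperUnitriangular (u i)) ∧ (∀ i, IsLowerUnitriangular (v i)) ∧
      g = (List.ofFn fun i => u i * v i).prod := by
  have base : elementary (Fin m) R ≤ rightStabilizer (unitriangularProducts m R L) := by
    intro e he y hy
    refine mem_unitriangularProducts_iff.2 (hSL _ ?_)
    rw [det_mul, det_eq_one_of_mem_unitriangularProducts hy, det_eq_one_of_mem_elementary he,
      one_mul]
  have stable (k : ℕ) (hk : m ≤ k) :
      elementary (Fin k) R ≤ rightStabilizer (unitriangularProducts k R L) := by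
    induction k, hk using Nat.le_induction with
    | base => exact base
    | succ k hk ih => exact elementary_le_rightStabilizer_succ (hm.trans hk) ih
  have hgY := stable n hn hg 1 (one_mem_unitriangularProducts L)
  rw [one_mul] at hgY
  exact mem_unitriangularProducts_iff.1 hgY
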